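/- arXiv:1102.2685 — 8 statements merged into one kernel-verified Lean document; each statement's English description precedes it below -/
import Mathlib

section
/- If an interpolatory function φ: G^{s+1} × [0,h] → G on a Lie group G is G-equivariant (i.e., φ(g·g^ν; t) = g·φ(g^ν; t) for all g ∈ G), and the Lagrangian L: TG → ℝ is invariant under the tangent-lifted left action of G, then the discrete Lagrangian L_d(g_0, g_1) = ext_{g^ν: g^0=g_0, g^s=g_1} h ∑_{i=1}^s b_i L(Tφ(g^ν; c_i h)) is G-invariant: L_d(g·g_0, g·g_1) = L_d(g_0, g_1). -/
/-- If the interpolatory function is `G`-equivariant (expressed via its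
tangent prolongation `Tφ`) and the Lagrangian `L : TG → ℝ` is invariant under the
tangent-lifted left action of `G`, then the Galerkin discrete Lagrangian
`L_d(g₀,g₁) = ext_{gν : g⁰=g₀, gˢ=g₁} h ∑ᵢ bᵢ L(Tφ(gν; cᵢ h))` (the extremization being
realized over the set of attainable action values) is `G`-invariant. -/
theorem discrete_lagrangian_G_invariant
    {G : Type*} [Group G] {TG : Type*} [MulAction G TG]
    (s : ℕ) (b c : Fin s → ℝ) (h : ℝ)
    (L : TG → ℝ)
    (Tφ : (Fin (s + 1) → G) → ℝ → TG)
    (hequiv : ∀ (g : G) (gν : Fin (s + 1) → G) (t : ℝ),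
      Tφ (fun ν => g * gν ν) t = g • Tφ gν t)
    (hinv : ∀ (g : G) (x : TG), L (g • x) = L x)
    (Ld : G → G → ℝ)
    (hLd : ∀ g0 g1 : G, Ld g0 g1 =
      sSup {y : ℝ | ∃ gν : Fin (s + 1) → G, gν 0 = g0 ∧ gν (Fin.last s) = g1 ∧
        y = h * ∑ i : Fin s, b i * L (Tφ gν (c i * h))})
    (g g0 g1 : G) :
    Ld (g * g0) (g * g1) = Ld g0 g1 := by
  rw [hLd, hLd]
  congr 1
  ext y
  constructor
  · rintro ⟨gν, h0, h1, rfl⟩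
    refine ⟨fun ν => g⁻¹ * gν ν, by simp [h0], by simp [h1], ?_⟩
    congr 1
    refine Finset.sum_congr rfl fun i _ => ?_
    have := hequiv g (fun ν => g⁻¹ * gν ν) (c i * h)
    simp only [mul_inv_cancel_left] at this
    rw [show (fun ν => gν ν) = gν from rfl] at this
    rw [this, hinv]
  · rintro ⟨gν, h0, h1, rfl⟩
    refine ⟨fun ν => g * gν ν, by simp [h0], by simp [h1], ?_⟩
    congr 1
    refine Finset.sum_congr rfl fun i _ => ?_
    rw [hequiv, hinv]
end

section
/- For the discrete action sum 𝔖_d = ∑_{k=0}^{N-1} (1/h) tr((I − F_k) J_d) with F_k = R_kᵀ R_{k+1} ∈ SO(3), stationarity with respect to variations δR_k = R_k η_k (η_k skew-symmetric, vanishing at k = 0 and k = N) holds if and only if the matrix F_k J_d − J_d F_{k-1} is symmetric for k = 1, ..., N−1, equivalently F_k J_d − J_d F_kᵀ − J_d F_{k-1} + F_{k-1}ᵀ J_d = 0. -/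
open Matrix Finset

/-!
Moving `F k` cyclically inside the trace and shifting the index of the second half of the sum
(summation by parts, using `η 0 = η N = 0`) rewrites the first variation as
`∑_{k=1}^{N-1} tr (η k * (F k * Jd - Jd * F (k - 1)))`. Varying one `η k` at a time, this vanishes
for all skew-symmetric `η` iff every `F k * Jd - Jd * F (k - 1)` is symmetric: skew-symmetric
matrices are trace-orthogonal to symmetric ones, and the elementary skew matrices
`E_ji - E_ij` detect the antisymmetric part.
-/

theorem Finset.sum_range_sub_succ_eq_sum_Ico {M : Type*} [AddCommGroup M] {N : ℕ}
    (f g : ℕ → M) (hf : f 0 = 0) (hg : g N = 0) :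
    ∑ k ∈ range N, (f k - g (k + 1)) = ∑ k ∈ Ico 1 N, (f k - g k) := by
  cases N with
  | zero => simp
  | succ N =>
    rw [sum_sub_distrib, sum_range_succ' f, sum_range_succ, sum_Ico_eq_sum_range, hf, hg,
      add_tsub_cancel_right, add_zero, add_zero, ← sum_sub_distrib]
    simp only [add_comm 1]

namespace Matrix

variable {n R : Type*} [Fintype n] [CommRing R]

theorem transpose_eq_iff_forall_trace_mul_eq_zero [DecidableEq n] [IsAddTorsionFree R]
    {M : Matrix n n R} : Mᵀ = M ↔ ∀ η : Matrix n n R, ηᵀ = -η → (η * M).trace = 0 := by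
  constructor
  · intro hM η hη
    refine self_eq_neg.mp ?_
    calc (η * M).trace = (η * M)ᵀ.trace := (trace_transpose _).symm
      _ = -(η * M).trace := by rw [transpose_mul, hη, hM, mul_neg, trace_neg, trace_mul_comm]
  · intro h
    ext i j
    have hskew : (single j i (1 : R) - single i j 1)ᵀ = -(single j i 1 - single i j 1) := by
      rw [transpose_sub, transpose_single, transpose_single, neg_sub]
    have := h _ hskew
    rw [sub_mul, trace_sub, trace_single_mul, trace_single_mul, sub_eq_zero] at this
    simpa using this.symm

theorem sum_trace_variation_eq (N : ℕ) (F η : ℕ → Matrix n n R) (J : Matrix n n R)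
    (h0 : η 0 = 0) (hN : η N = 0) :
    ∑ k ∈ range N, ((η k * F k - F k * η (k + 1)) * J).trace
      = ∑ k ∈ Ico 1 N, (η k * (F k * J - J * F (k - 1))).trace := by
  have hsummand : ∀ k, ((η k * F k - F k * η (k + 1)) * J).trace
      = (η k * (F k * J)).trace - (η (k + 1) * (J * F (k + 1 - 1))).trace := fun k => by
    rw [add_tsub_cancel_right, sub_mul, trace_sub, mul_assoc, mul_assoc,
      trace_mul_comm (F k), mul_assoc]
  simp_rw [hsummand, mul_sub, trace_sub]
  exact sum_range_sub_succ_eq_sum_Ico (fun k => (η k * (F k * J)).trace)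
    (fun k => (η k * (J * F (k - 1))).trace) (by simp [h0]) (by simp [hN])

theorem forall_skew_sum_trace_mul_eq_zero_iff [DecidableEq n] [IsAddTorsionFree R]
    (N : ℕ) (S : ℕ → Matrix n n R) :
    (∀ η : ℕ → Matrix n n R, (∀ k, (η k)ᵀ = -η k) → η 0 = 0 → η N = 0 →
        ∑ k ∈ Ico 1 N, (η k * S k).trace = 0) ↔
      ∀ k ∈ Ico 1 N, (S k)ᵀ = S k := by
  constructor
  · intro H k hk
    obtain ⟨hk1, hkN⟩ := mem_Ico.mp hk
    refine transpose_eq_iff_forall_trace_mul_eq_zero.mpr fun η₀ hη₀ => ?_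
    set η : ℕ → Matrix n n R := Pi.single k η₀
    have hskew : ∀ j, (η j)ᵀ = -η j := fun j => by
      rcases eq_or_ne j k with rfl | hj
      · simpa [η] using hη₀
      · simp [η, hj]
    have := H η hskew (Pi.single_eq_of_ne (by omega) _) (Pi.single_eq_of_ne (by omega) _)
    rw [sum_eq_single_of_mem k hk fun j _ hj => by simp [η, hj]] at this
    simpa [η] using this
  · intro hS η hη _ _
    exact sum_eq_zero fun k hk =>
      transpose_eq_iff_forall_trace_mul_eq_zero.mp (hS k hk) (η k) (hη k)

end Matrix

theorem rigid_body_discrete_stationarity_iff_general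
    (N : ℕ) (h : ℝ) (hh : h ≠ 0)
    (F : ℕ → Matrix (Fin 3) (Fin 3) ℝ)
    (Jd : Matrix (Fin 3) (Fin 3) ℝ) (hJd : Jdᵀ = Jd) :
    (∀ η : ℕ → Matrix (Fin 3) (Fin 3) ℝ,
        (∀ k, (η k)ᵀ = -η k) → η 0 = 0 → η N = 0 →
        ∑ k ∈ Finset.range N,
          (1 / h) * ((η k * F k - F k * η (k + 1)) * Jd).trace = 0) ↔
      (∀ k, 1 ≤ k → k ≤ N - 1 →
        ((F k * Jd - Jd * F (k - 1))ᵀ = F k * Jd - Jd * F (k - 1) ∧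
         F k * Jd - Jd * (F k)ᵀ - Jd * F (k - 1) + (F (k - 1))ᵀ * Jd = 0)) := by
  have hvariation : ∀ η : ℕ → Matrix (Fin 3) (Fin 3) ℝ, η 0 = 0 → η N = 0 →
      (∑ k ∈ range N, (1 / h) * ((η k * F k - F k * η (k + 1)) * Jd).trace = 0 ↔
        ∑ k ∈ Ico 1 N, (η k * (F k * Jd - Jd * F (k - 1))).trace = 0) := fun η h0 hN => by
    rw [← mul_sum, sum_trace_variation_eq N F η Jd h0 hN, mul_eq_zero,
      or_iff_right (one_div_ne_zero hh)]
  have hsymm_iff : ∀ k, (F k * Jd - Jd * F (k - 1))ᵀ = F k * Jd - Jd * F (k - 1) ↔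
      F k * Jd - Jd * (F k)ᵀ - Jd * F (k - 1) + (F (k - 1))ᵀ * Jd = 0 := fun k => by
    rw [transpose_sub, transpose_mul, transpose_mul, hJd, eq_comm, ← sub_eq_zero]
    exact iff_of_eq (congrArg (· = 0) (by abel))
  calc _ ↔ ∀ η : ℕ → Matrix (Fin 3) (Fin 3) ℝ, (∀ k, (η k)ᵀ = -η k) → η 0 = 0 → η N = 0 →
        ∑ k ∈ Ico 1 N, (η k * (F k * Jd - Jd * F (k - 1))).trace = 0 :=
      forall_congr' fun η => imp_congr_right fun _ => forall_congr' fun h0 =>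
        forall_congr' fun hN => hvariation η h0 hN
    _ ↔ _ := by
      rw [forall_skew_sum_trace_mul_eq_zero_iff]
      refine forall_congr' fun k => ?_
      rw [mem_Ico, and_imp, ← hsymm_iff, and_self]
      exact imp_congr_right fun _ => imp_congr (by omega) Iff.rfl

/-- For the discrete action sum `𝔖_d = ∑_{k=0}^{N-1} (1/h) tr((I − F_k)J_d)`
with `F_k = R_kᵀR_{k+1} ∈ SO(3)`, stationarity with respect to variations
`δR_k = R_k η_k` (`η_k` skew-symmetric, vanishing at `k = 0` and `k = N`), i.e. vanishing
of `δ𝔖_d = ∑_{k=0}^{N-1} (1/h) tr((η_k F_k − F_k η_{k+1}) J_d)` for all such variations,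
holds if and only if `F_k J_d − J_d F_{k-1}` is symmetric for `k = 1, …, N−1`,
equivalently `F_k J_d − J_d F_kᵀ − J_d F_{k-1} + F_{k-1}ᵀ J_d = 0`. -/
theorem rigid_body_discrete_stationarity_iff
    (N : ℕ) (h : ℝ) (hh : h ≠ 0)
    (F : ℕ → Matrix (Fin 3) (Fin 3) ℝ)
    (hF : ∀ k, (F k)ᵀ * F k = 1 ∧ F k * (F k)ᵀ = 1)
    (Jd : Matrix (Fin 3) (Fin 3) ℝ) (hJd : Jdᵀ = Jd) :
    (∀ η : ℕ → Matrix (Fin 3) (Fin 3) ℝ,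
        (∀ k, (η k)ᵀ = -η k) → η 0 = 0 → η N = 0 →
        ∑ k ∈ Finset.range N,
          (1 / h) * ((η k * F k - F k * η (k + 1)) * Jd).trace = 0) ↔
      (∀ k, 1 ≤ k → k ≤ N - 1 →
        ((F k * Jd - Jd * F (k - 1))ᵀ = F k * Jd - Jd * F (k - 1) ∧
         F k * Jd - Jd * (F k)ᵀ - Jd * F (k - 1) + (F (k - 1))ᵀ * Jd = 0)) :=
  rigid_body_discrete_stationarity_iff_general N h hh F Jd hJd
end

section
/- Substituting Rodrigues' formula F = I + (sin‖f‖/‖f‖) S(f) + ((1−cos‖f‖)/‖f‖²) S(f)² into the equation F J_d − J_d Fᵀ = S(g) yields the equivalent vector equation g = G(f) where G(f) = (sin‖f‖/‖f‖) Jf + ((1−cos‖f‖)/‖f‖²) f × Jf, with J = tr(J_d) I − J_d. -/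
open Matrix

/-- The hat map `S : ℝ³ → 𝔰𝔬(3)`, with `S(a) b = a × b`. -/
def hat (f : Fin 3 → ℝ) : Matrix (Fin 3) (Fin 3) ℝ :=
  !![0, -f 2, f 1; f 2, 0, -f 0; -f 1, f 0, 0]

lemma hat_inj (a b : Fin 3 → ℝ) (h : hat a = hat b) : a = b := by
  funext i
  fin_cases i
  · have := congrFun (congrFun h 2) 1; simpa [hat] using this
  · have := congrFun (congrFun h 0) 2; simpa [hat] using this
  · have := congrFun (congrFun h 1) 0; simpa [hat] using this

set_option maxHeartbeats 2000000 in
lemma key (s c : ℝ) (f : Fin 3 → ℝ) (Jd : Matrix (Fin 3) (Fin 3) ℝ) (hJd : Jdᵀ = Jd) :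
    (1 + s • hat f + c • (hat f * hat f)) * Jd -
      Jd * (1 + s • hat f + c • (hat f * hat f))ᵀ =
    hat (s • (Jd.trace • (1 : Matrix (Fin 3) (Fin 3) ℝ) - Jd).mulVec f +
         c • (crossProduct f ((Jd.trace • (1 : Matrix (Fin 3) (Fin 3) ℝ) - Jd).mulVec f))) := by
  have h01 : Jd 1 0 = Jd 0 1 := by
    have := congrFun (congrFun hJd 0) 1; simpa [Matrix.transpose_apply] using this
  have h02 : Jd 2 0 = Jd 0 2 := by
    have := congrFun (congrFun hJd 0) 2; simpa [Matrix.transpose_apply] using this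
  have h12 : Jd 2 1 = Jd 1 2 := by
    have := congrFun (congrFun hJd 1) 2; simpa [Matrix.transpose_apply] using this
  have hT : (1 + s • hat f + c • (hat f * hat f))ᵀ
      = 1 - s • hat f + c • (hat f * hat f) := by
    ext i j
    fin_cases i <;> fin_cases j <;>
      simp [hat, Matrix.mul_apply, Fin.sum_univ_three, Matrix.one_apply] <;>
        exact Or.inl (mul_comm _ _)
  rw [hT]
  ext i j
  fin_cases i <;> fin_cases j <;>
    simp [hat, Matrix.mul_apply, Matrix.mulVec, Matrix.trace, crossProduct,
      Fin.sum_univ_three, Matrix.one_apply, dotProduct, h01, h02, h12] <;> ring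

/-- Substituting Rodrigues' formula
`F = I + (sin‖f‖/‖f‖) S(f) + ((1−cos‖f‖)/‖f‖²) S(f)²` into `F J_d − J_d Fᵀ = S(g)`
yields the equivalent vector equation `g = G(f)` with
`G(f) = (sin‖f‖/‖f‖) Jf + ((1−cos‖f‖)/‖f‖²) f × Jf`, where `J = tr(J_d) I − J_d`. -/
theorem rodrigues_substitution_equiv
    (f g : Fin 3 → ℝ) (hf : f ≠ 0)
    (Jd : Matrix (Fin 3) (Fin 3) ℝ) (hJd : Jdᵀ = Jd) :
    let r : ℝ := Real.sqrt (f 0 ^ 2 + f 1 ^ 2 + f 2 ^ 2)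
    let J : Matrix (Fin 3) (Fin 3) ℝ := Jd.trace • (1 : Matrix (Fin 3) (Fin 3) ℝ) - Jd
    let F : Matrix (Fin 3) (Fin 3) ℝ :=
      1 + (Real.sin r / r) • hat f + ((1 - Real.cos r) / r ^ 2) • (hat f * hat f)
    (F * Jd - Jd * Fᵀ = hat g ↔
      g = (Real.sin r / r) • J.mulVec f +
          ((1 - Real.cos r) / r ^ 2) • (crossProduct f (J.mulVec f))) := by
  intro r J F
  have hk := key (Real.sin r / r) ((1 - Real.cos r) / r ^ 2) f Jd hJd
  constructor
  · intro h
    apply hat_inj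
    rw [← h, hk]
  · intro h
    rw [h, hk]
end

section
/- Substituting the Cayley transform F = (I + S(f_c))(I − S(f_c))^{-1} into F J_d − J_d Fᵀ = S(g) yields the equivalent vector equation g + g × f_c + (gᵀ f_c) f_c − 2 J f_c = 0, where J = tr(J_d)I − J_d. -/
open Matrix

/-- Clearing the inverses in the Cayley-substituted equation. -/
lemma cayley_reduce (fc g : Fin 3 → ℝ) (Jd : Matrix (Fin 3) (Fin 3) ℝ) :
    (1 + hat fc) * (1 - hat fc)⁻¹ * Jd - Jd * ((1 + hat fc) * (1 - hat fc)⁻¹)ᵀ = hat g ↔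
    (1 + hat fc) * Jd * (1 + hat fc) - (1 - hat fc) * Jd * (1 - hat fc)
      = (1 - hat fc) * hat g * (1 + hat fc) := by
  set S := hat fc with hS
  have hdA : ((1 : Matrix (Fin 3) (Fin 3) ℝ) - S).det ≠ 0 := by
    simp [hS, hat, Matrix.det_fin_three, Matrix.one_apply]
    nlinarith [sq_nonneg (fc 0), sq_nonneg (fc 1), sq_nonneg (fc 2)]
  have hdB : ((1 : Matrix (Fin 3) (Fin 3) ℝ) + S).det ≠ 0 := by
    simp [hS, hat, Matrix.det_fin_three, Matrix.one_apply]
    nlinarith [sq_nonneg (fc 0), sq_nonneg (fc 1), sq_nonneg (fc 2)]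
  have hST : Sᵀ = -S := by ext i j; fin_cases i <;> fin_cases j <;> simp [hS, hat]
  have hcomm : ((1 : Matrix (Fin 3) (Fin 3) ℝ) - S) * (1 + S) = (1 + S) * (1 - S) := by
    noncomm_ring
  set F := (1 + S) * (1 - S)⁻¹ with hF
  have h1 : (1 - S) * F = 1 + S := by
    rw [hF, ← mul_assoc, hcomm, mul_assoc,
      Matrix.mul_nonsing_inv _ (isUnit_iff_ne_zero.2 hdA), mul_one]
  have hFT : Fᵀ = (1 + S)⁻¹ * (1 - S) := by
    rw [hF, Matrix.transpose_mul, Matrix.transpose_nonsing_inv]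
    simp only [Matrix.transpose_sub, Matrix.transpose_add, Matrix.transpose_one, hST,
      sub_neg_eq_add, ← sub_eq_add_neg]
  have h2 : Fᵀ * (1 + S) = 1 - S := by
    rw [hFT, mul_assoc, hcomm, ← mul_assoc,
      Matrix.nonsing_inv_mul _ (isUnit_iff_ne_zero.2 hdB), one_mul]
  have cancel : ∀ X : Matrix (Fin 3) (Fin 3) ℝ,
      (1 - S)⁻¹ * ((1 - S) * X * (1 + S)) * (1 + S)⁻¹ = X := by
    intro X
    rw [mul_assoc (1 - S) X, ← mul_assoc ((1 - S)⁻¹),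
      Matrix.nonsing_inv_mul _ (isUnit_iff_ne_zero.2 hdA), one_mul, mul_assoc X,
      Matrix.mul_nonsing_inv _ (isUnit_iff_ne_zero.2 hdB), mul_one]
  have hexp : (1 - S) * (F * Jd - Jd * Fᵀ) * (1 + S)
      = (1 + S) * Jd * (1 + S) - (1 - S) * Jd * (1 - S) := by
    calc (1 - S) * (F * Jd - Jd * Fᵀ) * (1 + S)
        = ((1 - S) * F) * Jd * (1 + S) - (1 - S) * (Jd * (Fᵀ * (1 + S))) := by noncomm_ring
      _ = (1 + S) * Jd * (1 + S) - (1 - S) * Jd * (1 - S) := by rw [h1, h2]; noncomm_ring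
  constructor
  · intro h; rw [← hexp, h]
  · intro h
    have key : (1 - S) * (F * Jd - Jd * Fᵀ) * (1 + S) = (1 - S) * hat g * (1 + S) := by
      rw [hexp, h]
    calc F * Jd - Jd * Fᵀ
        = (1 - S)⁻¹ * ((1 - S) * (F * Jd - Jd * Fᵀ) * (1 + S)) * (1 + S)⁻¹ := (cancel _).symm
      _ = (1 - S)⁻¹ * ((1 - S) * hat g * (1 + S)) * (1 + S)⁻¹ := by rw [key]
      _ = hat g := cancel _

set_option maxHeartbeats 1000000 in
/-- The componentwise equivalence between the cleared matrix equation and the vector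
equation. -/
lemma cayley_entries (fc g : Fin 3 → ℝ) (Jd : Matrix (Fin 3) (Fin 3) ℝ) (hJd : Jdᵀ = Jd) :
    (1 + hat fc) * Jd * (1 + hat fc) - (1 - hat fc) * Jd * (1 - hat fc)
      = (1 - hat fc) * hat g * (1 + hat fc) ↔
    g + crossProduct g fc + (g ⬝ᵥ fc) • fc
      - (2 : ℝ) • (Jd.trace • (1 : Matrix (Fin 3) (Fin 3) ℝ) - Jd).mulVec fc = 0 := by
  have s01 : Jd 1 0 = Jd 0 1 := by simpa using congrFun (congrFun hJd 0) 1
  have s02 : Jd 2 0 = Jd 0 2 := by simpa using congrFun (congrFun hJd 0) 2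
  have s12 : Jd 2 1 = Jd 1 2 := by simpa using congrFun (congrFun hJd 1) 2
  constructor
  · intro h
    have e21 := congrFun (congrFun h 2) 1
    have e02 := congrFun (congrFun h 0) 2
    have e10 := congrFun (congrFun h 1) 0
    simp [hat, Matrix.mul_apply, Fin.sum_univ_three, Matrix.one_apply, Matrix.sub_apply,
      Matrix.add_apply, s01, s02, s12] at e21 e02 e10
    funext i
    fin_cases i <;>
      simp [crossProduct, Matrix.mulVec, dotProduct, Fin.sum_univ_three,
        Matrix.trace_fin_three, Matrix.one_apply, Matrix.sub_apply, Matrix.vecHead,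
        Matrix.vecTail, Function.comp, s01, s02, s12] <;>
      first
        | linear_combination e21 | linear_combination -e21
        | linear_combination e02 | linear_combination -e02
        | linear_combination e10 | linear_combination -e10
  · intro h
    have h0 := congrFun h 0
    have h1 := congrFun h 1
    have h2 := congrFun h 2
    simp [crossProduct, Matrix.mulVec, dotProduct, Fin.sum_univ_three,
      Matrix.trace_fin_three, Matrix.one_apply, Matrix.sub_apply, Matrix.vecHead,
      Matrix.vecTail, Function.comp, s01, s02, s12] at h0 h1 h2
    ext i j
    fin_cases i <;> fin_cases j <;>
      simp [hat, Matrix.mul_apply, Fin.sum_univ_three, Matrix.one_apply, Matrix.sub_apply,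
        Matrix.add_apply, s01, s02, s12] <;>
      first
        | ring1
        | linear_combination h0 | linear_combination -h0
        | linear_combination h1 | linear_combination -h1
        | linear_combination h2 | linear_combination -h2

/-- Substituting the Cayley transform `F = (I + S(f_c))(I − S(f_c))⁻¹` into
`F J_d − J_d Fᵀ = S(g)` yields the equivalent vector equation
`g + g × f_c + (gᵀ f_c) f_c − 2 J f_c = 0`, where `J = tr(J_d) I − J_d`. -/
theorem cayley_substitution_equiv
    (fc g : Fin 3 → ℝ)
    (Jd : Matrix (Fin 3) (Fin 3) ℝ) (hJd : Jdᵀ = Jd) :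
    let J : Matrix (Fin 3) (Fin 3) ℝ := Jd.trace • (1 : Matrix (Fin 3) (Fin 3) ℝ) - Jd
    let F : Matrix (Fin 3) (Fin 3) ℝ := (1 + hat fc) * (1 - hat fc)⁻¹
    (F * Jd - Jd * Fᵀ = hat g ↔
      g + crossProduct g fc + (g ⬝ᵥ fc) • fc - (2 : ℝ) • J.mulVec fc = 0) := by
  intro J F
  exact (cayley_reduce fc g Jd).trans (cayley_entries fc g Jd hJd)
end

section
/- Given a one-step method Ψ_h of order p (so the fully converged shooting solution approximates the exact Euler–Lagrange boundary-value solution with global error O(h^p) in both position and velocity), a quadrature formula of order q, and a Lagrangian L Lipschitz continuous in both variables, the shooting-based discrete Lagrangian L_d(q_0, q_1; h) = h ∑_{i=0}^n b_i L(q^i, v^i) satisfies L_d^E(q_0, q_1; h) = L_d(q_0, q_1; h) + O(h^{min(p,q)+1}). -/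
/-!
The error splits as the quadrature error of the exact solution, which is `O(h^{q+1})`, minus
`h ∑ bᵢ (L(qⁱ, vⁱ) - L(q₀₁(cᵢh), v₀₁(cᵢh)))`. By Lipschitz continuity each difference in the
sum is bounded by the position and velocity errors at the node, hence is `O(hᵖ)`, and the
factor `h` makes the second term `O(h^{p+1})`. Near `0`, both are `O(h^{min(p,q)+1})`.
-/

open Asymptotics Filter Topology

theorem Asymptotics.isBigO_pow_pow_of_le {𝕜 : Type*} [NormedDivisionRing 𝕜] {m n : ℕ}
    (h : m ≤ n) : (fun x : 𝕜 => x ^ n) =O[𝓝 0] fun x => x ^ m := by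
  rcases h.lt_or_eq with h | rfl
  exacts [(isLittleO_pow_pow h).isBigO, isBigO_refl _ _]

theorem LipschitzWith.isBigO_comp_sub_comp {α E F : Type*} [SeminormedAddCommGroup E]
    [SeminormedAddCommGroup F] {K : NNReal} {f : E → F} (hf : LipschitzWith K f)
    (l : Filter α) (u v : α → E) :
    (fun x => f (u x) - f (v x)) =O[l] fun x => u x - v x :=
  IsBigO.of_bound K <| Eventually.of_forall fun x => by
    simpa only [dist_eq_norm] using hf.dist_le_mul (u x) (v x)

theorem LipschitzWith.isBigO_sub_of_isBigO {α E F G H : Type*} [SeminormedAddCommGroup E]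
    [SeminormedAddCommGroup F] [SeminormedAddCommGroup G] [SeminormedAddCommGroup H] {K : NNReal}
    {L : E → F → G} (hL : LipschitzWith K fun x : E × F => L x.1 x.2) {l : Filter α}
    {u u' : α → E} {w w' : α → F} {g : α → H}
    (hu : (fun x => u x - u' x) =O[l] g) (hw : (fun x => w x - w' x) =O[l] g) :
    (fun x => L (u x) (w x) - L (u' x) (w' x)) =O[l] g :=
  (hL.isBigO_comp_sub_comp l (fun x => (u x, w x)) fun x => (u' x, w' x)).trans
    (hu.prod_left hw)

/-- Given a one-step method of order `p` (so the fully converged shooting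
solution approximates the exact Euler–Lagrange boundary-value solution with global error
`O(hᵖ)` in both position and velocity), a quadrature formula of order `q`, and a
Lagrangian `L` Lipschitz continuous in both variables, the shooting-based discrete
Lagrangian `L_d(q₀,q₁;h) = h ∑ᵢ bᵢ L(qⁱ, vⁱ)` satisfies
`L_d^E(q₀,q₁;h) = L_d(q₀,q₁;h) + O(h^{min(p,q)+1})`. -/
theorem shooting_discrete_lagrangian_order {m : ℕ} (n p q : ℕ)
    (b c : Fin (n + 1) → ℝ)
    (L : (Fin m → ℝ) → (Fin m → ℝ) → ℝ) (C : NNReal)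
    (hLip : LipschitzWith C fun x : (Fin m → ℝ) × (Fin m → ℝ) => L x.1 x.2)
    -- exact Euler--Lagrange boundary-value solution (as a function of the step `h`)
    (q01 v01 : ℝ → ℝ → (Fin m → ℝ))
    -- fully converged shooting points for the one-step method
    (qs vs : ℝ → Fin (n + 1) → (Fin m → ℝ))
    -- the quadrature formula is of order `q`
    (hquad : (fun h : ℝ => (∫ t in (0 : ℝ)..h, L (q01 h t) (v01 h t)) -
        h * ∑ i : Fin (n + 1), b i * L (q01 h (c i * h)) (v01 h (c i * h)))
        =O[nhdsWithin 0 (Set.Ioi 0)] fun h : ℝ => h ^ (q + 1))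
    -- the shooting solution has global error `O(hᵖ)` at the quadrature nodes
    (hq : ∀ i : Fin (n + 1), (fun h : ℝ => qs h i - q01 h (c i * h))
        =O[nhdsWithin 0 (Set.Ioi 0)] fun h : ℝ => h ^ p)
    (hv : ∀ i : Fin (n + 1), (fun h : ℝ => vs h i - v01 h (c i * h))
        =O[nhdsWithin 0 (Set.Ioi 0)] fun h : ℝ => h ^ p) :
    (fun h : ℝ => (∫ t in (0 : ℝ)..h, L (q01 h t) (v01 h t)) -
        h * ∑ i : Fin (n + 1), b i * L (qs h i) (vs h i))
      =O[nhdsWithin 0 (Set.Ioi 0)] fun h : ℝ => h ^ (min p q + 1) := by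
  have hpow {a b : ℕ} (hab : a ≤ b) :
      (fun h : ℝ => h ^ b) =O[𝓝[>] 0] fun h => h ^ a :=
    (isBigO_pow_pow_of_le hab).mono nhdsWithin_le_nhds
  have hshoot : (fun h : ℝ => h * ∑ i : Fin (n + 1),
      b i * (L (qs h i) (vs h i) - L (q01 h (c i * h)) (v01 h (c i * h))))
        =O[𝓝[>] 0] fun h => h ^ (p + 1) := by
    simpa only [pow_succ'] using (isBigO_refl (fun h : ℝ => h) _).mul
      (IsBigO.fun_sum fun i _ => (hLip.isBigO_sub_of_isBigO (hq i) (hv i)).const_mul_left (b i))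
  refine ((hquad.trans (hpow (by omega))).sub (hshoot.trans (hpow (by omega)))).congr_left
    fun h => ?_
  simp only [mul_sub, Finset.mul_sum, Finset.sum_sub_distrib]
  ring
end

section
/- Given a self-adjoint one-step method Ψ_h on TQ (Ψ_h = Ψ_{-h}^{-1}) and a symmetric quadrature formula (c_i + c_{n−i} = 1 and b_i = b_{n−i}), the shooting-based discrete Lagrangian L_d(q_0, q_1; h) = h∑_{i=0}^n b_i L(q^i, v^i), where (q^{i+1}, v^{i+1}) = Ψ_{(c_{i+1}−c_i)h}(q^i, v^i), q^0 = q_0, q^n = q_1, is self-adjoint: L_d^*(q_0, q_1; h) := −L_d(q_1, q_0; −h) = L_d(q_0, q_1; h). -/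
/-
Reading the shooting sequence of `(q₀, q₁; h)` backwards gives a shooting sequence of
`(q₁, q₀; −h)`: the symmetric nodes have mirrored step sizes, and self-adjointness of `Ψ`
inverts each step. The symmetric weights then make the two quadrature sums agree, and the
factor `−h` against `h` absorbs the sign.
-/

open Finset

/-- The shooting boundary-value sequence: `(qⁱ⁺¹,vⁱ⁺¹) = Ψ_{(cᵢ₊₁−cᵢ)h}(qⁱ,vⁱ)` with
`q⁰ = q₀` and `qⁿ = q₁`. Here a point of `TQ` is a pair `(q, v) : E × E`. -/
def IsShootingSeq {E : Type*} (n : ℕ) (Ψ : ℝ → E × E → E × E) (c : ℕ → ℝ)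
    (h : ℝ) (q0 q1 : E) (s : ℕ → E × E) : Prop :=
  (∀ i < n, s (i + 1) = Ψ ((c (i + 1) - c i) * h) (s i)) ∧
    (s 0).1 = q0 ∧ (s n).1 = q1

lemma node_gap_reflect {n : ℕ} {c : ℕ → ℝ} (hc : ∀ i ≤ n, c i + c (n - i) = 1)
    {i : ℕ} (hi : i < n) :
    c (n - i) - c (n - (i + 1)) = c (i + 1) - c i := by
  linarith [hc i hi.le, hc (i + 1) hi]

lemma IsShootingSeq.reflect {E : Type*} {n : ℕ} {Ψ : ℝ → E × E → E × E}
    (hself : ∀ (s : ℝ) (x : E × E), Ψ s (Ψ (-s) x) = x)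
    {c : ℕ → ℝ} (hc : ∀ i ≤ n, c i + c (n - i) = 1)
    {h : ℝ} {q0 q1 : E} {s : ℕ → E × E} (hs : IsShootingSeq n Ψ c h q0 q1 s) :
    IsShootingSeq n Ψ c (-h) q1 q0 (fun i => s (n - i)) := by
  obtain ⟨hstep, h0, hn⟩ := hs
  refine ⟨fun i hi => ?_, by simpa using hn, by simpa using h0⟩
  have hforward : s (n - i) = Ψ ((c (i + 1) - c i) * h) (s (n - (i + 1))) := by
    rw [← node_gap_reflect hc hi, show n - i = n - (i + 1) + 1 by omega]
    exact hstep _ (by omega)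
  have hinv := hself (-((c (i + 1) - c i) * h)) (s (n - (i + 1)))
  rw [neg_neg] at hinv
  simp only [hforward, mul_neg, hinv]

lemma sum_range_succ_mul_reflect {α : Type*} {n : ℕ} {b : ℕ → ℝ}
    (hb : ∀ i ≤ n, b i = b (n - i)) (f : ℕ → α) (L : α → ℝ) :
    ∑ i ∈ range (n + 1), b i * L (f (n - i)) = ∑ i ∈ range (n + 1), b i * L (f i) := by
  rw [← sum_range_reflect (fun i => b i * L (f i)) (n + 1)]
  refine sum_congr rfl fun i hi => ?_
  rw [hb i (Nat.lt_succ_iff.mp (mem_range.mp hi)), Nat.add_sub_cancel]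

/-- Given a self-adjoint one-step method `Ψ_h` on `TQ` (`Ψ_h = Ψ_{−h}⁻¹`)
and a symmetric quadrature formula (`cᵢ + c_{n−i} = 1`, `bᵢ = b_{n−i}`), the
shooting-based discrete Lagrangian `L_d(q₀,q₁;h) = h ∑ᵢ bᵢ L(qⁱ,vⁱ)` is self-adjoint:
`L_d^*(q₀,q₁;h) := −L_d(q₁,q₀;−h) = L_d(q₀,q₁;h)`. -/
theorem shooting_discrete_lagrangian_self_adjoint {E : Type*} (n : ℕ)
    (Ψ : ℝ → E × E → E × E)
    (hself : ∀ (s : ℝ) (x : E × E), Ψ s (Ψ (-s) x) = x)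
    (c b : ℕ → ℝ)
    (hc : ∀ i ≤ n, c i + c (n - i) = 1)
    (hb : ∀ i ≤ n, b i = b (n - i))
    (L : E × E → ℝ)
    (Ld : E → E → ℝ → ℝ)
    (hLd : ∀ (h : ℝ) (q0 q1 : E) (s : ℕ → E × E),
      IsShootingSeq n Ψ c h q0 q1 s →
      Ld q0 q1 h = h * ∑ i ∈ Finset.range (n + 1), b i * L (s i))
    (h : ℝ) (q0 q1 : E)
    (hex : ∃ s : ℕ → E × E, IsShootingSeq n Ψ c h q0 q1 s) :
    -Ld q1 q0 (-h) = Ld q0 q1 h := by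
  obtain ⟨s, hs⟩ := hex
  rw [hLd h q0 q1 s hs, hLd (-h) q1 q0 _ (hs.reflect hself hc),
    sum_range_succ_mul_reflect hb s L, neg_mul, neg_neg]
end

section
/- If a discrete Lagrangian L_d: Q × Q → ℝ is invariant under the diagonal action of a Lie group G (L_d(g·q_0, g·q_1) = L_d(q_0, q_1)), then the discrete momentum map J_{L_d}(q_k, q_{k+1})·ξ = ⟨−D_1 L_d(q_k, q_{k+1}), ξ_Q(q_k)⟩ is preserved by the discrete Lagrangian map F_{L_d} defined by the discrete Euler–Lagrange equation: J_{L_d} ∘ F_{L_d} = J_{L_d}. -/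
/-!
Differentiating the invariance `L_d(Φ_t q₀, Φ_t q₁) = L_d(q₀, q₁)` at `t = 0` gives
`D₁L_d(q₀,q₁)·ξ_Q(q₀) + D₂L_d(q₀,q₁)·ξ_Q(q₁) = 0`, i.e. the momentum `−D₁L_d·ξ_Q` at the left
point equals the momentum `D₂L_d·ξ_Q` at the right point. The discrete Euler–Lagrange equation
`D₂L_d(q₀,q₁) = −D₁L_d(q₁,q₂)` then identifies the latter with the momentum of `(q₁,q₂)`.
-/

section

variable {𝕜 E F G : Type*} [NontriviallyNormedField 𝕜]
  [NormedAddCommGroup E] [NormedSpace 𝕜 E] [NormedAddCommGroup F] [NormedSpace 𝕜 F]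
  [NormedAddCommGroup G] [NormedSpace 𝕜 G]

theorem fderiv_apply_eq_zero_of_comp_eq_const {f : E → F} {γ : 𝕜 → E} {v : E} {t₀ : 𝕜} {c : F}
    (hf : DifferentiableAt 𝕜 f (γ t₀)) (hγ : HasDerivAt γ v t₀) (hc : ∀ t, f (γ t) = c) :
    fderiv 𝕜 f (γ t₀) v = 0 := by
  have hcomp : HasDerivAt (fun t => f (γ t)) (fderiv 𝕜 f (γ t₀) v) t₀ :=
    hf.hasFDerivAt.comp_hasDerivAt t₀ hγ
  simp only [hc] at hcomp
  exact hcomp.unique (hasDerivAt_const t₀ c)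

theorem fderiv_partial_add_fderiv_partial {L : E → F → G} {a : E} {b : F}
    (hL : DifferentiableAt 𝕜 (fun p : E × F => L p.1 p.2) (a, b)) (u : E) (v : F) :
    fderiv 𝕜 (fun x => L x b) a u + fderiv 𝕜 (fun y => L a y) b v =
      fderiv 𝕜 (fun p : E × F => L p.1 p.2) (a, b) (u, v) := by
  set D := fderiv 𝕜 (fun p : E × F => L p.1 p.2) (a, b)
  have hfst : HasFDerivAt (fun x => L x b) (D ∘L .inl 𝕜 E F) a :=
    HasFDerivAt.comp (f := fun x => (x, b)) a hL.hasFDerivAt (hasFDerivAt_prodMk_left a b)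
  have hsnd : HasFDerivAt (fun y => L a y) (D ∘L .inr 𝕜 E F) b :=
    HasFDerivAt.comp (f := fun y => (a, y)) b hL.hasFDerivAt (hasFDerivAt_prodMk_right a b)
  rw [hfst.fderiv, hsnd.fderiv]
  exact ContinuousLinearMap.comp_inl_add_comp_inr _ (u, v)

end

theorem fderiv_partial_add_fderiv_partial_eq_zero_of_invariant
    {E F : Type*} [NormedAddCommGroup E] [NormedSpace ℝ E]
    [NormedAddCommGroup F] [NormedSpace ℝ F]
    {L : E → E → F} {Φ : ℝ → E → E} {ξQ : E → E} {a b : E}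
    (hL : DifferentiableAt ℝ (fun p : E × E => L p.1 p.2) (a, b))
    (hΦ0 : ∀ q, Φ 0 q = q) (hgen : ∀ q, HasDerivAt (fun t => Φ t q) (ξQ q) 0)
    (hinv : ∀ t q0 q1, L (Φ t q0) (Φ t q1) = L q0 q1) :
    fderiv ℝ (fun x => L x b) a (ξQ a) + fderiv ℝ (fun y => L a y) b (ξQ b) = 0 := by
  rw [fderiv_partial_add_fderiv_partial hL]
  have hcurve : HasDerivAt (fun t => (Φ t a, Φ t b)) (ξQ a, ξQ b) 0 := (hgen a).prodMk (hgen b)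
  have hL₀ : DifferentiableAt ℝ (fun p : E × E => L p.1 p.2) (Φ 0 a, Φ 0 b) := by
    simpa only [hΦ0] using hL
  simpa only [hΦ0] using fderiv_apply_eq_zero_of_comp_eq_const hL₀ hcurve fun t => hinv t a b

/-- discrete Noether's theorem: If a discrete Lagrangian
`L_d : Q × Q → ℝ` is invariant under the (diagonal) action of a symmetry group — here
expressed along the flow `Φ_t` of a one-parameter subgroup `t ↦ exp(tξ)` of the group,
whose infinitesimal generator is the vector field `ξ_Q` — then the discrete momentum map
`J_{L_d}(q_k,q_{k+1})·ξ = ⟨−D₁L_d(q_k,q_{k+1}), ξ_Q(q_k)⟩` is preserved by the discrete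
Lagrangian map `F_{L_d} : (q₀,q₁) ↦ (q₁,q₂)` defined by the discrete Euler–Lagrange
equation `D₂L_d(q₀,q₁) + D₁L_d(q₁,q₂) = 0`. -/
theorem discrete_noether
    {E : Type*} [NormedAddCommGroup E] [NormedSpace ℝ E]
    (Ld : E → E → ℝ)
    (hLd : Differentiable ℝ fun p : E × E => Ld p.1 p.2)
    (Φ : ℝ → E → E) (ξQ : E → E)
    (hΦ0 : ∀ q, Φ 0 q = q)
    (hgen : ∀ q, HasDerivAt (fun t => Φ t q) (ξQ q) 0)
    (hinv : ∀ (t : ℝ) (q0 q1 : E), Ld (Φ t q0) (Φ t q1) = Ld q0 q1)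
    (q0 q1 q2 : E)
    (hDEL : fderiv ℝ (fun y => Ld q0 y) q1 + fderiv ℝ (fun x => Ld x q2) q1 = 0) :
    -(fderiv ℝ (fun x => Ld x q2) q1) (ξQ q1) =
      -(fderiv ℝ (fun x => Ld x q1) q0) (ξQ q0) := by
  have hsymm := fderiv_partial_add_fderiv_partial_eq_zero_of_invariant (hLd (q0, q1)) hΦ0 hgen hinv
  have hDEL_ξ := congrArg (fun D => D (ξQ q1)) hDEL
  simp only [add_apply, zero_apply] at hDEL_ξ
  linarith
end

section
/- For f ∈ ℝ³, f ≠ 0, the matrix exponential of S(f) is given by Rodrigues' formula: exp(S(f)) = I + (sin‖f‖/‖f‖) S(f) + ((1 − cos‖f‖)/‖f‖²) S(f)², and this matrix lies in SO(3). -/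
/-!
An element `x` of a real algebra with `x ^ 3 = -r ^ 2 • x` has odd powers
`x ^ (2k+1) = (-r²)ᵏ x` and even powers `x ^ (2k+2) = (-r²)ᵏ x²`, so the odd and even parts of
the exponential series are the sine and (shifted) cosine series at `r`, scaled by `x / r` and
`x² / r²`. For `x = S(f)` this gives Rodrigues' formula with `r = ‖f‖`. Since `S(f)ᵀ = -S(f)`,
`(exp S(f))ᵀ exp S(f) = exp (-S(f)) exp S(f) = I`, so the determinant is `±1`; it is a square,
`det (exp (S(f)/2))²`, hence equal to `1`.
-/

open Matrix

open NormedSpace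
open scoped Nat

theorem Real.hasSum_one_sub_cos (r : ℝ) :
    HasSum (fun k : ℕ => (-1) ^ k * r ^ (2 * k + 2) / (2 * k + 2)!) (1 - Real.cos r) := by
  have h := ((hasSum_nat_add_iff' 1).mpr (Real.hasSum_cos r)).neg
  convert! h using 1
  · funext k
    rw [show 2 * (k + 1) = 2 * k + 2 by ring, pow_succ]
    ring
  · simp

section PowThreeEq

variable {𝔸 : Type*} [Ring 𝔸] [Algebra ℝ 𝔸] {x : 𝔸} {r : ℝ}

theorem pow_two_mul_add_one_of_pow_three_eq (hx : x ^ 3 = -r ^ 2 • x) (k : ℕ) :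
    x ^ (2 * k + 1) = (-r ^ 2) ^ k • x := by
  induction k with
  | zero => simp
  | succ k ih =>
    rw [show 2 * (k + 1) + 1 = 2 * k + 1 + 2 by ring, pow_add, ih, smul_mul_assoc,
      ← pow_succ', hx, smul_smul, ← pow_succ]

theorem pow_two_mul_add_two_of_pow_three_eq (hx : x ^ 3 = -r ^ 2 • x) (k : ℕ) :
    x ^ (2 * k + 2) = (-r ^ 2) ^ k • x ^ 2 := by
  rw [pow_succ, pow_two_mul_add_one_of_pow_three_eq hx, smul_mul_assoc, ← sq]

variable [TopologicalSpace 𝔸] [IsTopologicalRing 𝔸] [ContinuousSMul ℝ 𝔸] [T2Space 𝔸]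

theorem exp_eq_of_pow_three_eq (hr : r ≠ 0) (hx : x ^ 3 = -r ^ 2 • x) :
    exp x = 1 + (Real.sin r / r) • x + ((1 - Real.cos r) / r ^ 2) • x ^ 2 := by
  rw [exp_eq_tsum ℝ]
  refine HasSum.tsum_eq ?_
  rw [← hasSum_nat_add_iff' 1, add_assoc]
  simp only [Finset.range_one, Finset.sum_singleton, Nat.factorial_zero, Nat.cast_one, inv_one,
    pow_zero, one_smul, add_sub_cancel_left]
  refine HasSum.even_add_odd ?_ ?_
  · convert! ((Real.hasSum_sin r).div_const r).smul_const x using 1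
    funext k
    rw [pow_two_mul_add_one_of_pow_three_eq hx, smul_smul, neg_pow, ← pow_mul]
    congr 1
    field_simp
    ring
  · convert! ((Real.hasSum_one_sub_cos r).div_const (r ^ 2)).smul_const (x ^ 2) using 1
    funext k
    rw [pow_two_mul_add_two_of_pow_three_eq hx, smul_smul, neg_pow, ← pow_mul]
    congr 1
    field_simp
    ring

end PowThreeEq

namespace Matrix

variable {n : Type*} [Fintype n] [DecidableEq n]

theorem det_exp_nonneg (A : Matrix n n ℝ) : 0 ≤ (exp A).det := by
  have h : exp A = exp ((2⁻¹ : ℝ) • A) * exp ((2⁻¹ : ℝ) • A) := by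
    rw [← exp_add_of_commute _ _ (Commute.refl _), ← add_smul]
    norm_num
  rw [h, det_mul]
  exact mul_self_nonneg _

variable {A : Matrix n n ℝ}

theorem transpose_exp_mul_exp_of_transpose_eq_neg (hA : Aᵀ = -A) : (exp A)ᵀ * exp A = 1 := by
  rw [← exp_transpose, hA, ← exp_add_of_commute _ _ (Commute.refl A).neg_left, neg_add_cancel,
    exp_zero]

theorem det_exp_of_transpose_eq_neg (hA : Aᵀ = -A) : (exp A).det = 1 := by
  refine (pow_eq_one_iff_of_nonneg (det_exp_nonneg A) two_ne_zero).mp ?_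
  rw [sq]
  nth_rw 1 [← det_transpose]
  rw [← det_mul, transpose_exp_mul_exp_of_transpose_eq_neg hA, det_one]

end Matrix

theorem hat_transpose (f : Fin 3 → ℝ) : (hat f)ᵀ = -hat f := by
  ext i j
  fin_cases i <;> fin_cases j <;> simp [hat]

theorem hat_pow_three (f : Fin 3 → ℝ) :
    hat f ^ 3 = -(f 0 ^ 2 + f 1 ^ 2 + f 2 ^ 2) • hat f := by
  ext i j
  fin_cases i <;> fin_cases j <;>
    simp [hat, pow_succ, mul_apply, Fin.sum_univ_succ] <;> ring

theorem sum_sq_fin_three_pos {f : Fin 3 → ℝ} (hf : f ≠ 0) :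
    0 < f 0 ^ 2 + f 1 ^ 2 + f 2 ^ 2 := by
  have h : f ⬝ᵥ f = f 0 ^ 2 + f 1 ^ 2 + f 2 ^ 2 := by
    simp [dotProduct, Fin.sum_univ_three, sq]
  exact lt_of_le_of_ne (by positivity) fun h0 => hf (dotProduct_self_eq_zero.mp (h.trans h0.symm))

/-- For `f ∈ ℝ³`, `f ≠ 0`, the matrix exponential of `S(f)` is given by
Rodrigues' formula `exp(S(f)) = I + (sin‖f‖/‖f‖) S(f) + ((1−cos‖f‖)/‖f‖²) S(f)²`,
and this matrix lies in `SO(3)`. -/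
theorem rodrigues_formula (f : Fin 3 → ℝ) (hf : f ≠ 0) :
    let r : ℝ := Real.sqrt (f 0 ^ 2 + f 1 ^ 2 + f 2 ^ 2)
    NormedSpace.exp (hat f) =
        1 + (Real.sin r / r) • hat f +
          ((1 - Real.cos r) / r ^ 2) • (hat f * hat f) ∧
      (NormedSpace.exp (hat f))ᵀ * NormedSpace.exp (hat f) = 1 ∧
      (NormedSpace.exp (hat f)).det = 1 := by
  intro r
  have hq := sum_sq_fin_three_pos hf
  have hr : r ≠ 0 := Real.sqrt_ne_zero'.mpr hq
  have hcube : hat f ^ 3 = -r ^ 2 • hat f := by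
    rw [Real.sq_sqrt hq.le, hat_pow_three]
  refine ⟨?_, transpose_exp_mul_exp_of_transpose_eq_neg (hat_transpose f),
    det_exp_of_transpose_eq_neg (hat_transpose f)⟩
  rw [exp_eq_of_pow_three_eq hr hcube, sq (hat f)]
end
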